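/- Let α ∈ (0,1), p ∈ (1/(1−α), ∞], and let q satisfy 1/p + 1/q = 1 (so αq < 1). There exists a constant C_{n,α,q} > 0 with the following property: for every f ∈ L^p(ℝⁿ), every unit vector σ ∈ ℝⁿ, every x ∈ ℝⁿ and r > 0, defining φ(y) = σ on B_r(x), φ(y) = σ(2 − |y−x|/r) on B_{2r}(x) \ B_r(x), and φ = 0 outside B_{2r}(x), one has |∫_{B_r(x)} f · div^α φ dy| ≤ C_{n,α,q} ‖f‖_{L^p(ℝⁿ)} r^{n/q − α}. -/

import Mathlib

open MeasureTheory Metric Set Filter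
open scoped ENNReal NNReal Topology RealInnerProductSpace

noncomputable def muNA (n : ℕ) (α : ℝ) : ℝ :=
  2 ^ α * Real.pi ^ (-(n : ℝ) / 2) * Real.Gamma (((n : ℝ) + α + 1) / 2) /
    Real.Gamma ((1 - α) / 2)

/-- The fractional `α`-divergence of a vector field. -/
noncomputable def fracDiv (n : ℕ) (α : ℝ)
    (φ : EuclideanSpace ℝ (Fin n) → EuclideanSpace ℝ (Fin n))
    (x : EuclideanSpace ℝ (Fin n)) : ℝ :=
  muNA n α * ∫ y : EuclideanSpace ℝ (Fin n),
    ⟪y - x, φ y - φ x⟫ / ‖y - x‖ ^ ((n : ℝ) + α + 1)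

variable {E : Type*} [NormedAddCommGroup E] [NormedSpace ℝ E] [MeasurableSpace E]
  [BorelSpace E] [FiniteDimensional ℝ E] [Nontrivial E]

local notation "dim" => Module.finrank ℝ

lemma lintegral_fun_norm_addHaar' (μ : Measure E) [μ.IsAddHaarMeasure]
    (f : ℝ → ℝ≥0∞) (hf : Measurable f) :
    ∫⁻ x, f ‖x‖ ∂μ = (dim E : ℝ≥0∞) * μ (ball 0 1) *
      ∫⁻ y in Ioi (0 : ℝ), ENNReal.ofReal (y ^ (dim E - 1)) * f y := by
  calc
    ∫⁻ x, f ‖x‖ ∂μ = ∫⁻ x : ({(0)}ᶜ : Set E), f ‖x.1‖ ∂(μ.comap (↑)) := by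
      rw [lintegral_subtype_comap (measurableSet_singleton _).compl fun x ↦ f (‖x‖),
        restrict_compl_singleton]
    _ = ∫⁻ x : sphere (0 : E) 1 × Ioi (0 : ℝ), f x.2
        ∂μ.toSphere.prod (.volumeIoiPow (dim E - 1)) := by
      rw [← (μ.measurePreserving_homeomorphUnitSphereProd).lintegral_comp
        (f := fun x => f x.2.1) (by fun_prop)]
      simp only [homeomorphUnitSphereProd_apply_snd_coe]
    _ = μ.toSphere univ * ∫⁻ x : Ioi (0 : ℝ), f x ∂(Measure.volumeIoiPow (dim E - 1)) := by
      rw [lintegral_prod _ (by fun_prop)]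
      simp [lintegral_const, mul_comm]
    _ = _ := by
      rw [Measure.toSphere_apply_univ, Measure.volumeIoiPow,
        lintegral_withDensity_eq_lintegral_mul _ (by fun_prop) (by fun_prop : Measurable fun x : Ioi (0:ℝ) => f x.1)]
      simp only [Pi.mul_apply]
      rw [lintegral_subtype_comap measurableSet_Ioi (fun y : ℝ => ENNReal.ofReal (y ^ (dim E - 1)) * f y)]

variable {n : ℕ}

local notation "Ee" => EuclideanSpace ℝ (Fin n)

lemma dimEe (hn : 1 ≤ n) : Module.finrank ℝ Ee = n := by simp

lemma nontrivialEe (hn : 1 ≤ n) : Nontrivial Ee :=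
  Module.nontrivial_of_finrank_pos (R := ℝ) (by rw [dimEe hn]; omega)

lemma lintegral_compl_ball (hn : 1 ≤ n) {s : ℝ} (hs : (n : ℝ) < s) (y : Ee) {ρ : ℝ}
    (hρ : 0 < ρ) :
    ∫⁻ z in (ball y ρ)ᶜ, ENNReal.ofReal (‖z - y‖ ^ (-s)) ∂volume
      = (n : ℝ≥0∞) * volume (ball (0 : Ee) 1) * ENNReal.ofReal (ρ ^ ((n : ℝ) - s) / (s - n)) := by
  haveI := nontrivialEe hn
  set G : ℝ → ℝ≥0∞ := fun t => if t < ρ then 0 else ENNReal.ofReal (t ^ (-s)) with hG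
  have hGmeas : Measurable G := by
    apply Measurable.ite measurableSet_Iio measurable_const
    fun_prop
  have h1 : ∫⁻ z in (ball y ρ)ᶜ, ENNReal.ofReal (‖z - y‖ ^ (-s)) ∂volume
      = ∫⁻ z : Ee, G ‖z - y‖ := by
    rw [← lintegral_indicator measurableSet_ball.compl]
    congr 1; ext z
    by_cases h : ‖z - y‖ < ρ
    · have : z ∈ ball y ρ := by rwa [mem_ball, dist_eq_norm]
      rw [Set.indicator_of_notMem (Set.notMem_compl_iff.mpr this), hG]
      simp [h]
    · have hz : z ∈ (ball y ρ)ᶜ := by simp [mem_ball, dist_eq_norm, h]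
      rw [Set.indicator_of_mem hz, hG]
      simp [h]
  have h2 : ∫⁻ z : Ee, G ‖z - y‖ = ∫⁻ w : Ee, G ‖w‖ := by
    simp_rw [sub_eq_add_neg]
    exact lintegral_add_right_eq_self (fun w => G ‖w‖) (-y)
  have h3 := lintegral_fun_norm_addHaar' (volume : Measure Ee) G hGmeas
  rw [h1, h2, h3, dimEe hn]
  congr 1
  have h4 : ∫⁻ t in Ioi (0:ℝ), ENNReal.ofReal (t ^ (n - 1)) * G t
      = ∫⁻ t in Ioi (0:ℝ), (Ici ρ).indicator (fun t => ENNReal.ofReal (t ^ ((n : ℝ) - 1 - s))) t := by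
    apply setLIntegral_congr_fun measurableSet_Ioi
    intro t ht
    by_cases h : t < ρ
    · have hni : t ∉ Ici ρ := by simpa using h
      rw [Set.indicator_of_notMem hni, hG]
      simp [h]
    · push_neg at h
      have ht0 : (0:ℝ) < t := lt_of_lt_of_le hρ h
      rw [hG]
      simp only [not_lt.mpr h, if_false, indicator_of_mem (mem_Ici.mpr h)]
      rw [← ENNReal.ofReal_mul (by positivity)]
      congr 1
      rw [← Real.rpow_natCast t (n-1), ← Real.rpow_add ht0]
      congr 1
      push_cast [Nat.cast_sub hn]
      ring
  have hset : Ici ρ ∩ Ioi (0:ℝ) = Ici ρ :=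
    inter_eq_self_of_subset_left fun t ht => lt_of_lt_of_le hρ ht
  rw [h4, lintegral_indicator measurableSet_Ici, Measure.restrict_restrict measurableSet_Ici,
    hset, ← Measure.restrict_congr_set Ioi_ae_eq_Ici,
    ← ofReal_integral_eq_lintegral_ofReal
      (integrableOn_Ioi_rpow_of_lt (by linarith) hρ)
      (by filter_upwards [ae_restrict_mem measurableSet_Ioi] with t ht;
          exact Real.rpow_nonneg (le_of_lt (lt_trans hρ ht)) _),
    integral_Ioi_rpow_of_lt (by linarith) hρ]
  congr 1
  have hsn : s - (n:ℝ) ≠ 0 := by linarith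
  have : (n:ℝ) - 1 - s + 1 = (n:ℝ) - s := by ring
  rw [this]
  rw [div_eq_div_iff (by linarith) (by linarith)]
  ring

lemma integrableOn_compl_ball (hn : 1 ≤ n) {s : ℝ} (hs : (n : ℝ) < s) (y : Ee) {ρ : ℝ}
    (hρ : 0 < ρ) :
    IntegrableOn (fun z : Ee => ‖z - y‖ ^ (-s)) (ball y ρ)ᶜ volume := by
  constructor
  · exact (by fun_prop : Measurable fun z : Ee => ‖z - y‖ ^ (-s)).aestronglyMeasurable
  · rw [hasFiniteIntegral_iff_ofReal
      (Eventually.of_forall fun z => Real.rpow_nonneg (norm_nonneg _) _)]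
    rw [lintegral_compl_ball hn hs y hρ]
    exact ENNReal.mul_lt_top
      (ENNReal.mul_lt_top (ENNReal.natCast_lt_top n) measure_ball_lt_top) ENNReal.ofReal_lt_top

lemma integral_compl_ball (hn : 1 ≤ n) {s : ℝ} (hs : (n : ℝ) < s) (y : Ee) {ρ : ℝ}
    (hρ : 0 < ρ) :
    ∫ z in (ball y ρ)ᶜ, ‖z - y‖ ^ (-s) ∂volume
      = (n * (volume (ball (0 : Ee) 1)).toReal) * (ρ ^ ((n : ℝ) - s) / (s - n)) := by
  rw [integral_eq_lintegral_of_nonneg_ae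
      (Eventually.of_forall fun z => Real.rpow_nonneg (norm_nonneg _) _)
      (by fun_prop : Measurable fun z : Ee => ‖z - y‖ ^ (-s)).aestronglyMeasurable,
    lintegral_compl_ball hn hs y hρ]
  rw [ENNReal.toReal_mul, ENNReal.toReal_mul, ENNReal.toReal_ofReal
    (div_nonneg (Real.rpow_nonneg hρ.le _) (by linarith))]
  simp

lemma lintegral_ball_rim (hn : 1 ≤ n) {β : ℝ} (hβ0 : 0 ≤ β) (hβ1 : β < 1) (x : Ee) {r : ℝ}
    (hr : 0 < r) :
    ∫⁻ y in ball x r, ENNReal.ofReal ((r - ‖y - x‖) ^ (-β)) ∂volume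
      ≤ (n : ℝ≥0∞) * volume (ball (0 : Ee) 1) *
          ENNReal.ofReal (r ^ ((n : ℝ) - 1) * (r ^ (1 - β) / (1 - β))) := by
  haveI := nontrivialEe hn
  set G : ℝ → ℝ≥0∞ := fun t => if t < r then ENNReal.ofReal ((r - t) ^ (-β)) else 0 with hG
  have hGmeas : Measurable G := by
    apply Measurable.ite measurableSet_Iio _ measurable_const
    fun_prop
  have h1 : ∫⁻ y in ball x r, ENNReal.ofReal ((r - ‖y - x‖) ^ (-β)) ∂volume
      = ∫⁻ y : Ee, G ‖y - x‖ := by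
    rw [← lintegral_indicator measurableSet_ball]
    apply lintegral_congr
    intro z
    by_cases h : ‖z - x‖ < r
    · have hz : z ∈ ball x r := by rwa [mem_ball, dist_eq_norm]
      rw [Set.indicator_of_mem hz, hG]; simp [h]
    · have hz : z ∉ ball x r := by rwa [mem_ball, dist_eq_norm]
      rw [Set.indicator_of_notMem hz, hG]; simp [h]
  have h2 : ∫⁻ y : Ee, G ‖y - x‖ = ∫⁻ w : Ee, G ‖w‖ := by
    simp_rw [sub_eq_add_neg]
    exact lintegral_add_right_eq_self (fun w => G ‖w‖) (-x)
  rw [h1, h2, lintegral_fun_norm_addHaar' (volume : Measure Ee) G hGmeas, dimEe hn]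
  apply mul_le_mul_right _ _
  -- 1-D estimate
  have h4 : ∫⁻ t in Ioi (0:ℝ), ENNReal.ofReal (t ^ (n - 1)) * G t
      = ∫⁻ t in Ioo (0:ℝ) r, ENNReal.ofReal (t ^ (n - 1)) * ENNReal.ofReal ((r - t) ^ (-β)) := by
    rw [← lintegral_indicator measurableSet_Ioo, ← lintegral_indicator measurableSet_Ioi]
    congr 1; ext t
    by_cases ht : 0 < t
    · by_cases htr : t < r
      · rw [Set.indicator_of_mem (mem_Ioi.mpr ht), Set.indicator_of_mem (Set.mem_Ioo.mpr ⟨ht, htr⟩), hG]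
        simp [htr]
      · rw [Set.indicator_of_mem (mem_Ioi.mpr ht),
          Set.indicator_of_notMem (fun hc => htr hc.2), hG]
        simp [htr]
    · rw [Set.indicator_of_notMem (by simpa using ht),
        Set.indicator_of_notMem (fun hc => ht hc.1)]
  have h5 : ∀ t ∈ Ioo (0:ℝ) r, ENNReal.ofReal (t ^ (n - 1)) * ENNReal.ofReal ((r - t) ^ (-β))
      ≤ ENNReal.ofReal (r ^ ((n:ℝ) - 1)) * ENNReal.ofReal ((r - t) ^ (-β)) := by
    intro t ht
    apply mul_le_mul_left
    apply ENNReal.ofReal_le_ofReal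
    calc t ^ (n - 1) ≤ r ^ (n - 1) := pow_le_pow_left₀ ht.1.le ht.2.le _
      _ = r ^ ((n:ℝ) - 1) := by
          rw [← Real.rpow_natCast r (n - 1)]
          congr 1
          push_cast [Nat.cast_sub hn]
          ring
  have h6 : ∫⁻ t in Ioo (0:ℝ) r, ENNReal.ofReal ((r - t) ^ (-β)) ∂volume
      = ENNReal.ofReal (r ^ (1 - β) / (1 - β)) := by
    have hint : IntegrableOn (fun t : ℝ => (r - t) ^ (-β)) (Ioo 0 r) volume := by
      have h := ((intervalIntegral.intervalIntegrable_rpow' (r := -β) (by linarith)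
        (a := 0) (b := r)).comp_sub_left r).symm
      simp only [sub_zero, sub_self] at h
      rw [intervalIntegrable_iff_integrableOn_Ioo_of_le hr.le] at h
      exact h
    rw [← ofReal_integral_eq_lintegral_ofReal hint
      (by filter_upwards [ae_restrict_mem measurableSet_Ioo] with t ht;
          exact Real.rpow_nonneg (by linarith [ht.2]) _)]
    congr 1
    rw [setIntegral_congr_set Ioo_ae_eq_Ioc, ← intervalIntegral.integral_of_le hr.le,
      intervalIntegral.integral_comp_sub_left (fun u : ℝ => u ^ (-β)) r]
    simp only [sub_zero, sub_self]
    rw [integral_rpow (Or.inl (by linarith))]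
    rw [Real.zero_rpow (by linarith)]
    ring_nf
  calc ∫⁻ t in Ioi (0:ℝ), ENNReal.ofReal (t ^ (n - 1)) * G t
      = ∫⁻ t in Ioo (0:ℝ) r, ENNReal.ofReal (t ^ (n - 1)) * ENNReal.ofReal ((r - t) ^ (-β)) := h4
    _ ≤ ∫⁻ t in Ioo (0:ℝ) r, ENNReal.ofReal (r ^ ((n:ℝ) - 1)) * ENNReal.ofReal ((r - t) ^ (-β)) := by
        apply setLIntegral_mono_ae (by fun_prop)
        filter_upwards with t ht
        exact h5 t ht
    _ = ENNReal.ofReal (r ^ ((n:ℝ) - 1)) * ∫⁻ t in Ioo (0:ℝ) r, ENNReal.ofReal ((r - t) ^ (-β)) := by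
        rw [lintegral_const_mul' _ _ ENNReal.ofReal_ne_top]
    _ = ENNReal.ofReal (r ^ ((n:ℝ) - 1)) * ENNReal.ofReal (r ^ (1 - β) / (1 - β)) := by rw [h6]
    _ = ENNReal.ofReal (r ^ ((n:ℝ) - 1) * (r ^ (1 - β) / (1 - β))) := by
        rw [ENNReal.ofReal_mul (Real.rpow_nonneg hr.le _)]

lemma phi_norm_le (σ : Ee) (hσ : ‖σ‖ = 1) (x : Ee) {r : ℝ} (hr : 0 < r) (z : Ee) :
    ‖(if ‖z - x‖ < r then σ else if ‖z - x‖ < 2 * r then (2 - ‖z - x‖ / r) • σ else 0)‖ ≤ 1 := by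
  split_ifs with h1 h2
  · exact hσ.le
  · rw [norm_smul, Real.norm_eq_abs, hσ, mul_one]
    push_neg at h1
    have h3 : 1 ≤ ‖z - x‖ / r := (one_le_div hr).mpr h1
    have h4 : ‖z - x‖ / r < 2 := (div_lt_iff₀ hr).mpr (by linarith)
    rw [abs_le]; constructor <;> linarith
  · simp

lemma fracDiv_bound (hn : 1 ≤ n) {α : ℝ} (hα : α ∈ Set.Ioo (0:ℝ) 1) (σ x : Ee) (hσ : ‖σ‖ = 1)
    {r : ℝ} (hr : 0 < r) {y : Ee} (hy : y ∈ ball x r) :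
    |fracDiv n α (fun z => if ‖z - x‖ < r then σ
        else if ‖z - x‖ < 2 * r then (2 - ‖z - x‖ / r) • σ else 0) y|
      ≤ (|muNA n α| * (2 * (n * (volume (ball (0:Ee) 1)).toReal) / α)) * (r - ‖y - x‖) ^ (-α) := by
  obtain ⟨hα0, hα1⟩ := hα
  set φ : Ee → Ee := fun z => if ‖z - x‖ < r then σ
      else if ‖z - x‖ < 2 * r then (2 - ‖z - x‖ / r) • σ else 0 with hφ
  set ρ : ℝ := r - ‖y - x‖ with hρdef
  have hyx : ‖y - x‖ < r := by rwa [mem_ball, dist_eq_norm] at hy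
  have hρ : 0 < ρ := by simp [hρdef]; linarith
  have hφy : φ y = σ := by rw [hφ]; simp [hyx]
  have hs : (n : ℝ) < (n : ℝ) + α := by linarith
  -- the dominating function
  set g : Ee → ℝ := ((ball y ρ)ᶜ).indicator (fun z => 2 * ‖z - y‖ ^ (-((n:ℝ) + α))) with hg
  have hgint : Integrable g volume := by
    rw [hg]
    exact IntegrableOn.integrable_indicator
      ((integrableOn_compl_ball hn hs y hρ).const_mul 2) measurableSet_ball.compl
  have hbound : ∀ z : Ee, ‖⟪z - y, φ z - φ y⟫ / ‖z - y‖ ^ ((n : ℝ) + α + 1)‖ ≤ g z := by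
    intro z
    by_cases hz : z ∈ ball y ρ
    · have hzx : ‖z - x‖ < r := by
        have h1 : ‖z - y‖ < ρ := by rwa [mem_ball, dist_eq_norm] at hz
        calc ‖z - x‖ ≤ ‖z - y‖ + ‖y - x‖ := norm_sub_le_norm_sub_add_norm_sub z y x
          _ < ρ + ‖y - x‖ := by linarith
          _ = r := by rw [hρdef]; ring
      have hφz : φ z = σ := by rw [hφ]; simp [hzx]
      rw [hg, Set.indicator_of_notMem (Set.notMem_compl_iff.mpr hz)]
      rw [hφz, hφy, sub_self, inner_zero_right, zero_div, norm_zero]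
    · have hzy : ρ ≤ ‖z - y‖ := by
        rw [mem_ball, dist_eq_norm, not_lt] at hz; exact hz
      have ht0 : (0:ℝ) < ‖z - y‖ := lt_of_lt_of_le hρ hzy
      rw [hg, Set.indicator_of_mem (Set.mem_compl hz)]
      have hnum : |⟪z - y, φ z - φ y⟫| ≤ ‖z - y‖ * 2 := by
        calc |⟪z - y, φ z - φ y⟫| ≤ ‖z - y‖ * ‖φ z - φ y‖ := abs_real_inner_le_norm _ _
          _ ≤ ‖z - y‖ * 2 := by
            apply mul_le_mul_of_nonneg_left _ (norm_nonneg _)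
            calc ‖φ z - φ y‖ ≤ ‖φ z‖ + ‖φ y‖ := norm_sub_le _ _
              _ ≤ 1 + 1 := add_le_add (phi_norm_le σ hσ x hr z) (phi_norm_le σ hσ x hr y)
              _ = 2 := by norm_num
      have hden : (0:ℝ) < ‖z - y‖ ^ ((n : ℝ) + α + 1) := Real.rpow_pos_of_pos ht0 _
      rw [Real.norm_eq_abs, abs_div, abs_of_pos hden]
      calc |⟪z - y, φ z - φ y⟫| / ‖z - y‖ ^ ((n : ℝ) + α + 1)
          ≤ (‖z - y‖ * 2) / ‖z - y‖ ^ ((n : ℝ) + α + 1) := by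
            exact div_le_div_of_nonneg_right hnum hden.le
        _ = 2 * ‖z - y‖ ^ (-((n:ℝ) + α)) := by
            rw [show (n : ℝ) + α + 1 = 1 + ((n:ℝ) + α) by ring, Real.rpow_add ht0,
              Real.rpow_one, Real.rpow_neg ht0.le]
            field_simp
  have hval : ∫ z, g z ∂volume
      = 2 * ((n * (volume (ball (0:Ee) 1)).toReal) * (ρ ^ (-α) / α)) := by
    rw [hg, integral_indicator measurableSet_ball.compl, integral_const_mul,
      integral_compl_ball hn hs y hρ]
    norm_num
  have hInt : |∫ z : Ee, ⟪z - y, φ z - φ y⟫ / ‖z - y‖ ^ ((n : ℝ) + α + 1)|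
      ≤ 2 * ((n * (volume (ball (0:Ee) 1)).toReal) * (ρ ^ (-α) / α)) := by
    rw [← hval]
    exact norm_integral_le_of_norm_le hgint (Eventually.of_forall hbound)
  rw [fracDiv, abs_mul]
  calc |muNA n α| * |∫ z : Ee, ⟪z - y, φ z - φ y⟫ / ‖z - y‖ ^ ((n : ℝ) + α + 1)|
      ≤ |muNA n α| * (2 * ((n * (volume (ball (0:Ee) 1)).toReal) * (ρ ^ (-α) / α))) :=
        mul_le_mul_of_nonneg_left hInt (abs_nonneg _)
    _ = (|muNA n α| * (2 * (n * (volume (ball (0:Ee) 1)).toReal) / α)) * ρ ^ (-α) := by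
        field_simp

lemma fracDiv_meas (α : ℝ) (σ x : Ee) (r : ℝ) :
    AEStronglyMeasurable (fun y : Ee => fracDiv n α (fun z => if ‖z - x‖ < r then σ
      else if ‖z - x‖ < 2 * r then (2 - ‖z - x‖ / r) • σ else 0) y) volume := by
  set φ : Ee → Ee := fun z => if ‖z - x‖ < r then σ
      else if ‖z - x‖ < 2 * r then (2 - ‖z - x‖ / r) • σ else 0 with hφ
  have hφm : Measurable φ := by
    apply Measurable.ite (measurableSet_lt (by fun_prop) measurable_const) measurable_const
    apply Measurable.ite (measurableSet_lt (by fun_prop) measurable_const) _ measurable_const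
    exact (measurable_const.sub ((measurable_norm.comp
      (measurable_id.sub measurable_const)).div_const r)).smul_const σ
  have hF : StronglyMeasurable (fun p : Ee × Ee =>
      ⟪p.2 - p.1, φ p.2 - φ p.1⟫ / ‖p.2 - p.1‖ ^ ((n : ℝ) + α + 1)) := by
    apply Measurable.stronglyMeasurable
    apply Measurable.div
    · exact Measurable.inner (measurable_snd.sub measurable_fst)
        ((hφm.comp measurable_snd).sub (hφm.comp measurable_fst))
    · fun_prop
  have h2 : StronglyMeasurable (fun y : Ee =>
      ∫ z : Ee, ⟪z - y, φ z - φ y⟫ / ‖z - y‖ ^ ((n : ℝ) + α + 1) ∂volume) :=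
    StronglyMeasurable.integral_prod_right' (f := fun p : Ee × Ee =>
      ⟪p.2 - p.1, φ p.2 - φ p.1⟫ / ‖p.2 - p.1‖ ^ ((n : ℝ) + α + 1)) hF
  exact ((h2.const_mul (muNA n α)) : StronglyMeasurable fun y : Ee =>
    muNA n α * ∫ z : Ee, ⟪z - y, φ z - φ y⟫ / ‖z - y‖ ^ ((n : ℝ) + α + 1)).aestronglyMeasurable

theorem stmt9 (n : ℕ) (hn : 1 ≤ n) (α : ℝ) (hα : α ∈ Set.Ioo (0 : ℝ) 1)
    (p : ℝ≥0∞) (hp : ENNReal.ofReal (1 / (1 - α)) < p)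
    (q : ℝ) (hq1 : 1 ≤ q) (hpq : 1 / p.toReal + 1 / q = 1) :
    ∃ C : ℝ, 0 < C ∧ ∀ f : EuclideanSpace ℝ (Fin n) → ℝ, MemLp f p volume →
      ∀ σ x : EuclideanSpace ℝ (Fin n), ‖σ‖ = 1 → ∀ r : ℝ, 0 < r →
      |∫ y in ball x r, f y *
          fracDiv n α (fun z => if ‖z - x‖ < r then σ
            else if ‖z - x‖ < 2 * r then (2 - ‖z - x‖ / r) • σ else 0) y|
        ≤ C * (eLpNorm f p volume).toReal * r ^ ((n : ℝ) / q - α) := by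
  obtain ⟨hα0, hα1⟩ := hα
  have hq0 : (0:ℝ) < q := lt_of_lt_of_le one_pos hq1
  -- exponent facts
  have hβ1 : α * q < 1 := by
    rcases eq_or_ne p ∞ with hp' | hp'
    · have h1 : 1 / q = 1 := by rw [hp'] at hpq; simpa using hpq
      have h2 : q = 1 := by field_simp at h1; linarith
      rw [h2, mul_one]; exact hα1
    · have hple : 1 / (1 - α) < p.toReal := by
        rwa [ENNReal.ofReal_lt_iff_lt_toReal
          (by have h1a : (0:ℝ) < 1 - α := by linarith
              positivity) hp'] at hp
      have h1a : (0:ℝ) < 1 - α := by linarith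
      have hd : (0:ℝ) < 1 / (1 - α) := by positivity
      have h2 : 1 / p.toReal < 1 - α := by
        have := one_div_lt_one_div_of_lt hd hple
        rwa [one_div_one_div] at this
      have h3 : α < 1 / q := by
        have : 1 / q = 1 - 1 / p.toReal := by linarith
        rw [this]; linarith
      calc α * q < (1/q) * q := by
            apply mul_lt_mul_of_pos_right h3 hq0
        _ = 1 := by field_simp
  have hβ0 : 0 ≤ α * q := by positivity
  set q' : ℝ≥0∞ := ENNReal.ofReal q with hq'def
  have hq'0 : q' ≠ 0 := by simp [hq'def, ENNReal.ofReal_eq_zero]; linarith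
  have hq'top : q' ≠ ∞ := ENNReal.ofReal_ne_top
  have hq'toReal : q'.toReal = q := ENNReal.toReal_ofReal hq0.le
  have hp0 : p ≠ 0 := by
    intro h; rw [h] at hp; exact (not_lt.mpr zero_le) hp
  have hconj : (1:ℝ≥0∞)/1 = 1/q' + 1/p := by
    rcases eq_or_ne p ∞ with hp' | hp'
    · have h1 : 1 / q = 1 := by rw [hp'] at hpq; simpa using hpq
      have h2 : q = 1 := by field_simp at h1; linarith
      have h2q : q' = 1 := by rw [hq'def, h2]; simp
      rw [hp', h2q]
      simp
    · have hptpos : 0 < p.toReal := ENNReal.toReal_pos hp0 hp'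
      have h1 : (1:ℝ≥0∞)/q' = ENNReal.ofReal (1/q) := by
        rw [one_div, one_div, hq'def, ← ENNReal.ofReal_inv_of_pos hq0]
      have h2 : (1:ℝ≥0∞)/p = ENNReal.ofReal (1/p.toReal) := by
        rw [one_div, one_div, ENNReal.ofReal_inv_of_pos hptpos, ENNReal.ofReal_toReal hp']
      rw [h1, h2, ← ENNReal.ofReal_add (by positivity) (by positivity)]
      rw [show 1/q + 1/p.toReal = 1 by linarith]
      simp
  -- constants
  set vB : ℝ := (volume (ball (0 : EuclideanSpace ℝ (Fin n)) 1)).toReal with hvB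
  have hvB0 : 0 ≤ vB := ENNReal.toReal_nonneg
  set K : ℝ := |muNA n α| * (2 * (n * vB) / α) with hK
  have hK0 : 0 ≤ K := by
    apply mul_nonneg (abs_nonneg _)
    apply div_nonneg _ hα0.le
    positivity
  set A : ℝ := K * ((n * vB) * (1/(1 - α * q))) ^ (1/q) with hA
  have hA0 : 0 ≤ A := by
    apply mul_nonneg hK0
    apply Real.rpow_nonneg
    have : 0 < 1 - α * q := by linarith
    positivity
  refine ⟨A + 1, by linarith, ?_⟩
  intro f hf σ x hσ r hr
  set φ : EuclideanSpace ℝ (Fin n) → EuclideanSpace ℝ (Fin n) := fun z =>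
    if ‖z - x‖ < r then σ else if ‖z - x‖ < 2 * r then (2 - ‖z - x‖ / r) • σ else 0 with hφ
  set g : EuclideanSpace ℝ (Fin n) → ℝ := fun y => fracDiv n α φ y with hgdef
  set H : EuclideanSpace ℝ (Fin n) → ℝ := fun y => K * (r - ‖y - x‖) ^ (-α) with hH
  set μB := volume.restrict (ball x r) with hμB
  have hHmeas : AEStronglyMeasurable H μB :=
    (by fun_prop : Measurable fun y : EuclideanSpace ℝ (Fin n) =>
      K * (r - ‖y - x‖) ^ (-α)).aestronglyMeasurable
  have hfmeas : AEStronglyMeasurable f μB := hf.1.restrict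
  -- eLpNorm of H
  have hHelp : eLpNorm H q' μB ≤ ENNReal.ofReal (A * r ^ ((n:ℝ)/q - α)) := by
    rw [eLpNorm_eq_lintegral_rpow_enorm_toReal hq'0 hq'top, hq'toReal]
    have hlin : ∫⁻ y in ball x r, (‖H y‖₊ : ℝ≥0∞) ^ q ∂volume
        ≤ ENNReal.ofReal (K ^ q * ((n * vB) * (r ^ ((n:ℝ) - 1) * (r ^ (1 - α * q) / (1 - α * q))))) := by
      have hcongr : ∫⁻ y in ball x r, (‖H y‖₊ : ℝ≥0∞) ^ q ∂volume
          = ∫⁻ y in ball x r, ENNReal.ofReal (K ^ q) *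
              ENNReal.ofReal ((r - ‖y - x‖) ^ (-(α * q))) ∂volume := by
        apply setLIntegral_congr_fun measurableSet_ball
        intro y hy
        have hyx : ‖y - x‖ < r := by rwa [mem_ball, dist_eq_norm] at hy
        have ht0 : (0:ℝ) < r - ‖y - x‖ := by linarith
        have hHy0 : 0 ≤ H y := by
          rw [hH]; exact mul_nonneg hK0 (Real.rpow_nonneg ht0.le _)
        beta_reduce
        rw [show ((‖H y‖₊ : ℝ≥0∞)) = ENNReal.ofReal (H y) by
          change ‖H y‖ₑ = _; rw [← ofReal_norm, Real.norm_eq_abs, abs_of_nonneg hHy0]]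
        rw [ENNReal.ofReal_rpow_of_nonneg hHy0 hq0.le, hH]
        rw [Real.mul_rpow hK0 (Real.rpow_nonneg ht0.le _), ← Real.rpow_mul ht0.le]
        rw [ENNReal.ofReal_mul (by positivity : (0:ℝ) ≤ K ^ q)]
        ring_nf
      rw [hcongr, lintegral_const_mul' _ _ ENNReal.ofReal_ne_top]
      calc ENNReal.ofReal (K ^ q) * ∫⁻ y in ball x r, ENNReal.ofReal ((r - ‖y - x‖) ^ (-(α * q))) ∂volume
          ≤ ENNReal.ofReal (K ^ q) * ((n : ℝ≥0∞) * volume (ball (0 : EuclideanSpace ℝ (Fin n)) 1) *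
              ENNReal.ofReal (r ^ ((n:ℝ) - 1) * (r ^ (1 - α * q) / (1 - α * q)))) :=
            mul_le_mul_right (lintegral_ball_rim hn hβ0 hβ1 x hr) _
        _ = ENNReal.ofReal (K ^ q * ((n * vB) * (r ^ ((n:ℝ) - 1) * (r ^ (1 - α * q) / (1 - α * q))))) := by
            rw [show (n : ℝ≥0∞) * volume (ball (0 : EuclideanSpace ℝ (Fin n)) 1)
                = ENNReal.ofReal (n * vB) by
              rw [ENNReal.ofReal_mul (by positivity), hvB,
                ENNReal.ofReal_toReal measure_ball_lt_top.ne, ENNReal.ofReal_natCast]]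
            rw [ENNReal.ofReal_mul (Real.rpow_nonneg hK0 _),
              ENNReal.ofReal_mul (by positivity : (0:ℝ) ≤ (n:ℝ) * vB)]
    calc (∫⁻ y in ball x r, (‖H y‖₊ : ℝ≥0∞) ^ q ∂volume) ^ (1/q)
        ≤ (ENNReal.ofReal (K ^ q * ((n * vB) * (r ^ ((n:ℝ) - 1) * (r ^ (1 - α * q) / (1 - α * q)))))) ^ (1/q) :=
          ENNReal.rpow_le_rpow hlin (by positivity)
      _ = ENNReal.ofReal ((K ^ q * ((n * vB) * (r ^ ((n:ℝ) - 1) * (r ^ (1 - α * q) / (1 - α * q))))) ^ (1/q)) := by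
          rw [← ENNReal.ofReal_rpow_of_nonneg _ (by positivity)]
          apply mul_nonneg (Real.rpow_nonneg hK0 _)
          apply mul_nonneg (by positivity)
          apply mul_nonneg (Real.rpow_nonneg hr.le _)
          apply div_nonneg (Real.rpow_nonneg hr.le _) (by linarith)
      _ = ENNReal.ofReal (A * r ^ ((n:ℝ)/q - α)) := by
          congr 1
          have h1mβ : (0:ℝ) < 1 - α * q := by linarith
          have e1 : r ^ ((n:ℝ) - 1) * (r ^ (1 - α * q) / (1 - α * q))
              = r ^ ((n:ℝ) - α * q) * (1 / (1 - α * q)) := by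
            rw [show (n:ℝ) - α * q = ((n:ℝ) - 1) + (1 - α * q) by ring, Real.rpow_add hr]
            field_simp
          rw [e1, hA]
          rw [show K ^ q * ((n * vB) * (r ^ ((n:ℝ) - α * q) * (1 / (1 - α * q))))
              = (K ^ q) * (((n * vB) * (1/(1 - α * q))) * r ^ ((n:ℝ) - α * q)) by ring]
          rw [Real.mul_rpow (Real.rpow_nonneg hK0 _) (by positivity), Real.mul_rpow (by positivity)
            (Real.rpow_nonneg hr.le _)]
          rw [← Real.rpow_mul hK0, mul_one_div_cancel hq0.ne', Real.rpow_one,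
            ← Real.rpow_mul hr.le]
          rw [show ((n:ℝ) - α * q) * (1/q) = (n:ℝ)/q - α by field_simp]
          ring
  have hHelp_ne_top : eLpNorm H q' μB ≠ ∞ :=
    (lt_of_le_of_lt hHelp ENNReal.ofReal_lt_top).ne
  -- pointwise bound
  have hptwise : ∀ᵐ y ∂μB, ‖f y * g y‖ ≤ ‖(H • f) y‖ := by
    rw [hμB]
    filter_upwards [ae_restrict_mem measurableSet_ball] with y hy
    have hyx : ‖y - x‖ < r := by rwa [mem_ball, dist_eq_norm] at hy
    have ht0 : (0:ℝ) < r - ‖y - x‖ := by linarith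
    have hHy0 : 0 ≤ H y := by
      rw [hH]; exact mul_nonneg hK0 (Real.rpow_nonneg ht0.le _)
    have hsf : (H • f) y = H y * f y := rfl
    rw [hsf, Real.norm_eq_abs, abs_mul, Real.norm_eq_abs, abs_mul, abs_of_nonneg hHy0,
      mul_comm (H y) |f y|]
    apply mul_le_mul_of_nonneg_left _ (abs_nonneg _)
    exact fracDiv_bound hn ⟨hα0, hα1⟩ σ x hσ hr hy
  -- integrability of the dominating function
  haveI : ENNReal.HolderTriple q' p 1 := ⟨by simpa [one_div] using hconj.symm⟩
  have hHf_mem : MemLp (H • f) 1 μB :=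
    MemLp.smul (hf.restrict _) (⟨hHmeas, lt_of_le_of_lt hHelp ENNReal.ofReal_lt_top⟩ : MemLp H q' μB)
  have hHf_int : Integrable (H • f) μB := memLp_one_iff_integrable.mp hHf_mem
  -- main estimate
  calc |∫ y in ball x r, f y * g y|
      ≤ ∫ y in ball x r, ‖(H • f) y‖ := by
        rw [← Real.norm_eq_abs]
        exact norm_integral_le_of_norm_le hHf_int.norm hptwise
    _ = (eLpNorm (H • f) 1 μB).toReal := by
        rw [eLpNorm_one_eq_lintegral_enorm,
          integral_norm_eq_lintegral_enorm hHf_mem.1]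
    _ ≤ ((ENNReal.ofReal (A * r ^ ((n:ℝ)/q - α))) * eLpNorm f p volume).toReal := by
        apply ENNReal.toReal_mono
          (ENNReal.mul_ne_top ENNReal.ofReal_ne_top hf.eLpNorm_ne_top)
        calc eLpNorm (H • f) 1 μB ≤ eLpNorm H q' μB * eLpNorm f p μB :=
              eLpNorm_smul_le_mul_eLpNorm hfmeas hHmeas
          _ ≤ ENNReal.ofReal (A * r ^ ((n:ℝ)/q - α)) * eLpNorm f p volume :=
              mul_le_mul' hHelp (eLpNorm_mono_measure f Measure.restrict_le_self)
    _ = (A * r ^ ((n:ℝ)/q - α)) * (eLpNorm f p volume).toReal := by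
        rw [ENNReal.toReal_mul, ENNReal.toReal_ofReal
          (mul_nonneg hA0 (Real.rpow_nonneg hr.le _))]
    _ ≤ (A + 1) * (eLpNorm f p volume).toReal * r ^ ((n:ℝ)/q - α) := by
        have h1 : 0 ≤ (eLpNorm f p volume).toReal := ENNReal.toReal_nonneg
        have h2 : 0 ≤ r ^ ((n:ℝ)/q - α) := Real.rpow_nonneg hr.le _
        nlinarith
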